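/- Let F9 be a finite field with 9 elements, let G = PGL_2(9) be the quotient of GL_2(F9) by its center, and let P be a Sylow 3-subgroup of G. Then P is isomorphic to C3 × C3, and the automizer N_G(P)/C_G(P) is isomorphic to the cyclic group C8. -/

import Mathlib

/-- The centralizer `C_G(P)`, viewed inside the normalizer `N_G(P)`, is a normal
subgroup of `N_G(P)` (it is the kernel of the conjugation action `N_G(P) → Aut(P)`). -/
instance centralizer_subgroupOf_normalizer_normal {G : Type*} [Group G] (P : Subgroup G) :
    ((Subgroup.centralizer (P : Set G)).subgroupOf (Subgroup.normalizer (P : Set G))).Normal := by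
  rw [← Subgroup.normalizerMonoidHom_ker]
  exact MonoidHom.normal_ker _

/-- The automizer `N_G(P) / C_G(P)` of a subgroup `P` of `G`. -/
abbrev automizer {G : Type*} [Group G] (P : Subgroup G) : Type _ :=
  (Subgroup.normalizer (P : Set G)) ⧸ (Subgroup.centralizer (P : Set G)).subgroupOf (Subgroup.normalizer (P : Set G))

/-!
Let `U` be the image in `PGL₂(F)` of the upper unitriangular matrices `u x = !![1, x; 0, 1]`;
it is isomorphic to `(F, +)`, and for `|F| = q = pᵏ` its index `q² - 1` is prime to `p`, so it is
a Sylow `p`-subgroup. The upper triangular (Borel) subgroup `B` acts on `U` through the character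
`δ(b) = b₀₀ / b₁₁`, by `b u(x) b⁻¹ = u(δ(b) x)`. One computes that `N(U)` is the image of `B` and
that the image of `b ∈ B` centralizes `U` iff `δ(b) = 1`, so `N(U)/C(U) ≅ B / ker δ ≅ Fˣ`.
For `q = 9` this gives `U ≅ C₃ × C₃` and `N(U)/C(U) ≅ F₉ˣ ≅ C₈`; every Sylow `3`-subgroup is
conjugate to `U`, and automizers are invariant under conjugation.
-/

open Subgroup Matrix

section Automizer

variable {G G' : Type*} [Group G] [Group G']

lemma centralizer_map_mulEquiv (e : G ≃* G') (H : Subgroup G) :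
    centralizer (H.map e.toMonoidHom : Set G') = (centralizer (H : Set G)).map e.toMonoidHom := by
  ext x
  constructor
  · intro hx
    rw [mem_map_equiv, mem_centralizer_iff]
    intro h hh
    apply e.injective
    simpa using hx (e h) ⟨h, hh, rfl⟩
  · rintro ⟨c, hc, rfl⟩ _ ⟨h, hh, rfl⟩
    simp only [MulEquiv.coe_toMonoidHom, ← map_mul, hc h hh]

def automizerMapEquiv (e : G ≃* G') (H : Subgroup G) :
    automizer H ≃* automizer (H.map e.toMonoidHom) :=
  QuotientGroup.congr _ _
    ((e.subgroupMap _).trans (MulEquiv.subgroupCongr (map_equiv_normalizer_eq H e)))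
    (by
      ext x
      rw [map_equiv_eq_comap_symm, mem_comap, mem_subgroupOf, mem_subgroupOf,
        centralizer_map_mulEquiv, mem_map_equiv]
      rfl)

end Automizer

lemma Sylow.coe_smul_eq_map_conj {G : Type*} [Group G] {p : ℕ} (g : G) (P : Sylow p G) :
    ((g • P : Sylow p G) : Subgroup G) = (P : Subgroup G).map (MulAut.conj g).toMonoidHom := by
  rw [Sylow.coe_subgroup_smul, Subgroup.pointwise_smul_def]
  rfl

namespace Matrix.GeneralLinearGroup

variable {F : Type*} [Field F]

variable (F) in
def borel : Subgroup (GL (Fin 2) F) where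
  carrier := {g | g 1 0 = 0}
  one_mem' := by simp
  mul_mem' {g h} hg hh := by simp_all [Matrix.mul_apply]
  inv_mem' {g} hg := by
    simp_all [Matrix.coe_units_inv, Matrix.inv_def, Matrix.adjugate_fin_two]

lemma mem_borel {g : GL (Fin 2) F} : g ∈ borel F ↔ g 1 0 = 0 := Iff.rfl

lemma diag_ne_zero_of_mem_borel {g : GL (Fin 2) F} (hg : g ∈ borel F) :
    g 0 0 ≠ 0 ∧ g 1 1 ≠ 0 := by
  have := g.det_ne_zero
  rw [det_fin_two, mem_borel.1 hg, mul_zero, sub_zero] at this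
  exact mul_ne_zero_iff.1 this

def borelRatio : borel F →* Fˣ where
  toFun b := Units.mk0 (b.1 0 0 / b.1 1 1)
    (div_ne_zero (diag_ne_zero_of_mem_borel b.2).1 (diag_ne_zero_of_mem_borel b.2).2)
  map_one' := by ext; simp
  map_mul' a b := by
    have ha := diag_ne_zero_of_mem_borel a.2
    have hb := diag_ne_zero_of_mem_borel b.2
    ext
    simp only [Subgroup.coe_mul, Units.val_mul, mul_apply, Fin.sum_univ_two, mem_borel.1 a.2,
      mem_borel.1 b.2, mul_zero, add_zero, zero_mul, zero_add, Units.val_mk0]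
    field_simp

@[simp] lemma coe_borelRatio (b : borel F) : (borelRatio b : F) = b.1 0 0 / b.1 1 1 := rfl

lemma borelRatio_surjective : Function.Surjective (borelRatio (F := F)) := by
  intro t
  let d : GL (Fin 2) F :=
    .mk !![(t : F), 0; 0, 1] !![(t⁻¹ : Fˣ), 0; 0, 1] (by simp [one_fin_two]) (by simp [one_fin_two])
  exact ⟨⟨d, by simp [mem_borel, d]⟩, by ext; simp [d]⟩

lemma upperRightHom_mem_borel (x : F) : upperRightHom x ∈ borel F := by simp [mem_borel]

lemma center_le_borel : center (GL (Fin 2) F) ≤ borel F := by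
  rw [center_eq_range_scalar]
  rintro _ ⟨c, rfl⟩
  simp [mem_borel, coe_scalar]

lemma conj_upperRightHom (b : borel F) (x : F) :
    (b : GL (Fin 2) F) * upperRightHom x * (b : GL (Fin 2) F)⁻¹ =
      upperRightHom (borelRatio b * x) := by
  obtain ⟨-, hb⟩ := diag_ne_zero_of_mem_borel b.2
  rw [mul_inv_eq_iff_eq_mul]
  ext i j
  fin_cases i <;> fin_cases j <;>
    simp [Matrix.mul_apply, mem_borel.1 b.2, hb, add_comm, div_mul_eq_mul_div]

lemma upperRightHom_mem_center_iff {x : F} :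
    upperRightHom x ∈ center (GL (Fin 2) F) ↔ x = 0 := by
  refine ⟨fun h => ?_, fun h => by simp [h]⟩
  rw [center_eq_range_scalar] at h
  obtain ⟨c, hc⟩ := h
  simpa [coe_scalar] using congr_arg (fun g : GL (Fin 2) F => g 0 1) hc.symm

lemma mem_borel_of_conj_upperRightHom_mem_borel {g : GL (Fin 2) F}
    (hg : g * upperRightHom 1 * g⁻¹ ∈ borel F) : g ∈ borel F := by
  set v := g * upperRightHom 1 * g⁻¹
  have hvg : v * g = g * upperRightHom 1 := by simp [v]
  have e10 : v 1 1 * g 1 0 = g 1 0 := by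
    simpa [Matrix.mul_apply, mem_borel.1 hg] using congr_arg (fun k : GL (Fin 2) F => k 1 0) hvg
  have e11 : v 1 1 * g 1 1 = g 1 0 + g 1 1 := by
    simpa [Matrix.mul_apply, mem_borel.1 hg] using congr_arg (fun k : GL (Fin 2) F => k 1 1) hvg
  by_contra hg10
  have hv11 : v 1 1 = 1 := mul_right_cancel₀ hg10 (by rw [e10, one_mul])
  rw [hv11] at e11
  exact hg10 (mem_borel.2 (by linear_combination -e11))

local notation "PGL₂" => GL (Fin 2) F ⧸ center (GL (Fin 2) F)
local notation "π" => QuotientGroup.mk' (center (GL (Fin 2) F))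

def upperRightPGL : Multiplicative F →* PGL₂ :=
  (π).comp upperRightHom.toMonoidHom

lemma upperRightPGL_ofAdd (x : F) : upperRightPGL (.ofAdd x) = π (upperRightHom x) := rfl

variable (F) in
def unipotentPGL : Subgroup PGL₂ := upperRightPGL.range

lemma upperRightPGL_injective : Function.Injective (upperRightPGL (F := F)) := by
  rw [injective_iff_map_eq_one]
  intro x hx
  rwa [← ofAdd_toAdd x, upperRightPGL_ofAdd, QuotientGroup.mk'_apply, QuotientGroup.eq_one_iff,
    upperRightHom_mem_center_iff, ← ofAdd_eq_one, ofAdd_toAdd] at hx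

lemma comap_unipotentPGL_le_borel : (unipotentPGL F).comap π ≤ borel F := by
  rintro g ⟨x, hx⟩
  obtain ⟨z, hz, rfl⟩ := (QuotientGroup.mk'_eq_mk' _).1 hx
  exact mul_mem (upperRightHom_mem_borel _) (center_le_borel hz)

lemma conj_upperRightPGL (b : borel F) (x : F) :
    π b * upperRightPGL (.ofAdd x) * (π b)⁻¹ = upperRightPGL (.ofAdd (borelRatio b * x)) := by
  simp only [upperRightPGL_ofAdd, ← conj_upperRightHom, map_mul, map_inv]

lemma conj_mem_unipotentPGL (b : borel F) {h : PGL₂}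
    (hh : h ∈ unipotentPGL F) : π b * h * (π b)⁻¹ ∈ unipotentPGL F := by
  obtain ⟨x, rfl⟩ := hh
  rw [← ofAdd_toAdd x, conj_upperRightPGL]
  exact ⟨_, rfl⟩

lemma normalizer_unipotentPGL : normalizer (unipotentPGL F : Set PGL₂) = (borel F).map π := by
  apply le_antisymm
  · intro x hx
    obtain ⟨g, rfl⟩ := QuotientGroup.mk'_surjective _ x
    refine ⟨g, mem_borel_of_conj_upperRightHom_mem_borel (comap_unipotentPGL_le_borel ?_), rfl⟩
    rw [mem_comap, map_mul, map_mul, map_inv]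
    exact (mem_normalizer_iff.1 hx _).1 ⟨.ofAdd 1, rfl⟩
  · rintro _ ⟨g, hg, rfl⟩
    refine mem_normalizer_iff.2 fun h => ⟨conj_mem_unipotentPGL ⟨g, hg⟩, fun hh => ?_⟩
    simpa [mul_assoc] using conj_mem_unipotentPGL ⟨g, hg⟩⁻¹ hh

lemma mem_centralizer_unipotentPGL_iff (b : borel F) :
    π b ∈ centralizer (unipotentPGL F : Set PGL₂) ↔ borelRatio b = 1 := by
  rw [mem_centralizer_iff]
  constructor
  · intro h
    have := mul_inv_eq_iff_eq_mul.2 (h _ ⟨.ofAdd 1, rfl⟩).symm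
    rw [conj_upperRightPGL, upperRightPGL_injective.eq_iff, EmbeddingLike.apply_eq_iff_eq,
      mul_one] at this
    exact Units.ext this
  · rintro hb _ ⟨x, rfl⟩
    refine (mul_inv_eq_iff_eq_mul.1 ?_).symm
    rw [← ofAdd_toAdd x, conj_upperRightPGL, hb, Units.val_one, one_mul]

def borelToNormalizer : borel F →* normalizer (unipotentPGL F : Set PGL₂) :=
  ((π).comp (borel F).subtype).codRestrict _
    fun b => normalizer_unipotentPGL (F := F) ▸ ⟨b, b.2, rfl⟩

lemma borelToNormalizer_surjective : Function.Surjective (borelToNormalizer (F := F)) := by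
  rintro ⟨x, hx⟩
  obtain ⟨g, hg, rfl⟩ := normalizer_unipotentPGL (F := F) ▸ hx
  exact ⟨⟨g, hg⟩, rfl⟩

def borelToAutomizer : borel F →* automizer (unipotentPGL F) :=
  (QuotientGroup.mk' _).comp borelToNormalizer

lemma borelToAutomizer_surjective : Function.Surjective (borelToAutomizer (F := F)) :=
  (QuotientGroup.mk'_surjective _).comp borelToNormalizer_surjective

lemma ker_borelToAutomizer : (borelToAutomizer (F := F)).ker = borelRatio.ker := by
  ext b
  rw [MonoidHom.mem_ker, MonoidHom.mem_ker, borelToAutomizer, MonoidHom.comp_apply,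
    QuotientGroup.mk'_apply, QuotientGroup.eq_one_iff, mem_subgroupOf]
  exact mem_centralizer_unipotentPGL_iff b

noncomputable def automizerUnipotentPGLEquiv : automizer (unipotentPGL F) ≃* Fˣ :=
  (QuotientGroup.quotientKerEquivOfSurjective _ borelToAutomizer_surjective).symm.trans <|
    (QuotientGroup.quotientMulEquivOfEq ker_borelToAutomizer).trans <|
      QuotientGroup.quotientKerEquivOfSurjective _ borelRatio_surjective

noncomputable def unipotentPGLEquiv : Multiplicative F ≃* unipotentPGL F :=
  MonoidHom.ofInjective upperRightPGL_injective

lemma card_unipotentPGL : Nat.card (unipotentPGL F) = Nat.card F :=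
  (Nat.card_congr unipotentPGLEquiv.toEquiv).symm

lemma card_center_GL [Fintype F] : Nat.card (center (GL (Fin 2) F)) = Fintype.card F - 1 := by
  rw [center_eq_range_scalar, ← Nat.card_eq_fintype_card, ← Nat.card_units]
  refine (Nat.card_congr (MonoidHom.ofInjective fun u v h => ?_).toEquiv).symm
  exact Units.ext (by simpa [coe_scalar] using congr_arg (fun g : GL (Fin 2) F => g 0 0) h)

lemma index_unipotentPGL [Fintype F] : (unipotentPGL F).index = Fintype.card F ^ 2 - 1 := by
  have hU := (unipotentPGL F).index_mul_card
  have hZ := card_eq_card_quotient_mul_card_subgroup (center (GL (Fin 2) F))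
  rw [card_GL_field, card_center_GL, Fin.prod_univ_two] at hZ
  rw [card_unipotentPGL, Nat.card_eq_fintype_card] at hU
  set q := Fintype.card F
  have hq : 1 < q := Fintype.one_lt_card
  have hq2 : q ≤ q ^ 2 := Nat.le_self_pow two_ne_zero q
  simp only [Fin.val_zero, Fin.val_one, pow_zero, pow_one] at hZ
  zify [hq.le, hq2, hq.le.trans hq2] at hZ hU ⊢
  have hcancel : ((unipotentPGL F).index - ((q : ℤ) ^ 2 - 1)) * (q * (q - 1)) = 0 := by
    linear_combination ((q : ℤ) - 1) * hU - hZ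
  have hq0 : (q : ℤ) * (q - 1) ≠ 0 := by
    have : (1 : ℤ) < q := by exact_mod_cast hq
    positivity
  exact sub_eq_zero.1 ((mul_eq_zero.1 hcancel).resolve_right hq0)

variable [Fintype F] (p : ℕ) [CharP F p]

lemma isPGroup_unipotentPGL : IsPGroup p (unipotentPGL F) := by
  obtain ⟨n, -, hn⟩ := FiniteField.card F p
  exact IsPGroup.of_card (n := n) (by rw [card_unipotentPGL, Nat.card_eq_fintype_card, hn])

lemma not_dvd_index_unipotentPGL [Fact p.Prime] : ¬ p ∣ (unipotentPGL F).index := by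
  rw [index_unipotentPGL]
  intro h
  have hq : p ∣ Fintype.card F ^ 2 :=
    dvd_pow ((CharP.cast_eq_zero_iff F p _).1 (FiniteField.cast_card_eq_zero F)) two_ne_zero
  have h1 : 1 ≤ Fintype.card F ^ 2 := Nat.one_le_pow _ _ Fintype.card_pos
  have := Nat.dvd_sub hq h
  rw [Nat.sub_sub_self h1, Nat.dvd_one] at this
  exact (Fact.out : p.Prime).one_lt.ne' this

variable (F) in
def sylowUnipotentPGL [Fact p.Prime] : Sylow p PGL₂ :=
  (isPGroup_unipotentPGL p).toSylow (not_dvd_index_unipotentPGL p)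

end Matrix.GeneralLinearGroup

lemma nonempty_addEquiv_zmod_prod {R : Type*} [Ring R] [Fintype R] (p : ℕ) [Fact p.Prime]
    [CharP R p] (hR : Fintype.card R = p ^ 2) : Nonempty (R ≃+ ZMod p × ZMod p) := by
  let _ : Algebra (ZMod p) R := ZMod.algebra R p
  have hcard := Module.card_eq_pow_finrank (K := ZMod p) (V := R)
  rw [hR, ZMod.card] at hcard
  have hrank : Module.finrank (ZMod p) R = Module.finrank (ZMod p) (ZMod p × ZMod p) := by
    rw [Module.finrank_prod, Module.finrank_self,
      ← Nat.pow_right_injective (Fact.out : p.Prime).two_le hcard]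
  exact ⟨(LinearEquiv.ofFinrankEq R _ hrank).toAddEquiv⟩

open Matrix.GeneralLinearGroup in
/-- If `G = PGL₂(F₉)` and `P` is a Sylow 3-subgroup of `G`, then `P ≅ C₃ × C₃` and the
automizer `N_G(P)/C_G(P)` is cyclic of order 8. -/
theorem stmt_10 (F : Type) [Field F] [Fintype F] (hF : Fintype.card F = 9)
    (P : Sylow 3 (Matrix.GeneralLinearGroup (Fin 2) F ⧸
      Subgroup.center (Matrix.GeneralLinearGroup (Fin 2) F))) :
    Nonempty (↥(P : Subgroup (Matrix.GeneralLinearGroup (Fin 2) F ⧸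
        Subgroup.center (Matrix.GeneralLinearGroup (Fin 2) F))) ≃*
      Multiplicative (ZMod 3) × Multiplicative (ZMod 3)) ∧
    Nonempty (automizer (P : Subgroup (Matrix.GeneralLinearGroup (Fin 2) F ⧸
        Subgroup.center (Matrix.GeneralLinearGroup (Fin 2) F))) ≃*
      Multiplicative (ZMod 8)) := by
  have : Fact (Nat.Prime 3) := ⟨Nat.prime_three⟩
  have : CharP F 3 := charP_of_card_eq_prime_pow (f := 2) hF
  obtain ⟨g, rfl⟩ := MulAction.exists_smul_eq (GL (Fin 2) F ⧸ center (GL (Fin 2) F))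
    (sylowUnipotentPGL F 3) P
  rw [Sylow.coe_smul_eq_map_conj, sylowUnipotentPGL, IsPGroup.toSylow_coe]
  obtain ⟨e⟩ := nonempty_addEquiv_zmod_prod 3 hF
  have hcard : Nat.card Fˣ = Nat.card (Multiplicative (ZMod 8)) := by simp [Nat.card_units, hF]
  exact ⟨⟨((MulAut.conj g).subgroupMap _).symm.trans <| unipotentPGLEquiv.symm.trans <|
      (AddEquiv.toMultiplicative e).trans (MulEquiv.prodMultiplicative _ _)⟩,
    ⟨(automizerMapEquiv (MulAut.conj g) _).symm.trans <|
      automizerUnipotentPGLEquiv.trans (mulEquivOfCyclicCardEq hcard)⟩⟩
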